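/- Let G=(V,E) be a finite simple graph whose vertex set is partitioned into V_1,…,V_k such that each V_i induces a clique in G and |V_i| ≥ 2 for all i. Let G'=(V',E') be the graph with V' consisting of two disjoint copies V and V̄ = {v̄ : v ∈ V} of V together with 2k new vertices w_1,…,w_k, w̄_1,…,w̄_k, and with E' = {u v̄ : uv ∈ E} ∪ {u w̄_i : u ∈ V_i, 1 ≤ i ≤ k} ∪ {ū w_i : u ∈ V_i, 1 ≤ i ≤ k}. Let U = {w_i, w̄_i : 1 ≤ i ≤ k}. Then G' has a minimal vertex cover containing U if and only if G has an independent set containing exactly one vertex from each V_i. -/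
import Mathlib


/-- `S` is a vertex cover of `G`: every edge has an endpoint in `S`. -/
def IsVertexCover {V : Type*} (G : SimpleGraph V) (S : Set V) : Prop :=
  ∀ ⦃u v : V⦄, G.Adj u v → u ∈ S ∨ v ∈ S

/-- `S` is a minimal vertex cover of `G`: no proper subset is a vertex cover. -/
def IsMinimalVertexCover {V : Type*} (G : SimpleGraph V) (S : Set V) : Prop :=
  IsVertexCover G S ∧ ∀ T : Set V, T ⊂ S → ¬ IsVertexCover G T

/-- `S` is an independent set of `G`: pairwise non-adjacent vertices. -/
def IsIndepSet {V : Type*} (G : SimpleGraph V) (S : Set V) : Prop :=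
  ∀ ⦃u v : V⦄, u ∈ S → v ∈ S → ¬ G.Adj u v

/-- `S` is a maximal independent set of `G`: no proper superset is independent. -/
def IsMaximalIndepSet {V : Type*} (G : SimpleGraph V) (S : Set V) : Prop :=
  IsIndepSet G S ∧ ∀ T : Set V, S ⊂ T → ¬ IsIndepSet G T

/-- `(G, U)` is a yes-instance of Ext VC: some minimal vertex cover contains `U`. -/
def ExtVC {V : Type*} (G : SimpleGraph V) (U : Set V) : Prop :=
  ∃ S : Set V, U ⊆ S ∧ IsMinimalVertexCover G S

/-- `(G, U)` is a yes-instance of Ext IS: some maximal independent set is contained in `U`. -/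
def ExtIS {V : Type*} (G : SimpleGraph V) (U : Set V) : Prop :=
  ∃ S : Set V, S ⊆ U ∧ IsMaximalIndepSet G S

/-- The closed neighborhood `N_G[U]` of a set `U` of vertices. -/
def closedNbhd {V : Type*} (G : SimpleGraph V) (U : Set V) : Set V :=
  U ∪ {v | ∃ u ∈ U, G.Adj u v}

/-- `S` is a dominating set of `G`: every vertex is in `S` or adjacent to a vertex of `S`. -/
def IsDominating {V : Type*} (G : SimpleGraph V) (S : Set V) : Prop :=
  ∀ v : V, v ∈ S ∨ ∃ u ∈ S, G.Adj u v

/-- The graph `G'` built from `G` and a partition of `V` into classes `V_1, …, V_k`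
(encoded by a coloring `c : V → Fin k`). The vertices are two copies of `V`
(`Sum.inl (Sum.inl u)` is `u`, `Sum.inl (Sum.inr u)` is `ū`) together with the `2k`
new vertices `w_i = Sum.inr (Sum.inl i)` and `w̄_i = Sum.inr (Sum.inr i)`. The edges
are `u v̄` for `uv ∈ E`, `u w̄_i` for `u ∈ V_i` and `ū w_i` for `u ∈ V_i`. -/
def extGraph {V : Type*} (G : SimpleGraph V) {k : ℕ} (c : V → Fin k) :
    SimpleGraph ((V ⊕ V) ⊕ (Fin k ⊕ Fin k)) :=
  SimpleGraph.fromRel (fun x y =>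
    match x, y with
    | .inl (.inl u), .inl (.inr v) => G.Adj u v
    | .inl (.inl u), .inr (.inr i) => c u = i
    | .inl (.inr u), .inr (.inl i) => c u = i
    | _, _ => False)

lemma minimalVC_iff_private {V : Type*} (G : SimpleGraph V) (S : Set V) :
    IsMinimalVertexCover G S ↔
      IsVertexCover G S ∧ ∀ s ∈ S, ∃ x, G.Adj s x ∧ x ∉ S := by
  constructor
  · rintro ⟨hc, hmin⟩
    refine ⟨hc, fun s hs => ?_⟩
    have h := hmin (S \ {s}) ⟨Set.diff_subset, fun hsub => (hsub hs).2 rfl⟩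
    by_contra hx
    push_neg at hx
    apply h
    intro a b hab
    rcases hc hab with ha | hb
    · by_cases has : a = s
      · subst has
        exact Or.inr ⟨hx b hab, hab.ne'⟩
      · exact Or.inl ⟨ha, has⟩
    · by_cases hbs : b = s
      · subst hbs
        exact Or.inl ⟨hx a hab.symm, hab.ne⟩
      · exact Or.inr ⟨hb, hbs⟩
  · rintro ⟨hc, hpriv⟩
    refine ⟨hc, fun T hT hTc => ?_⟩
    obtain ⟨s, hsS, hsT⟩ := Set.exists_of_ssubset hT
    obtain ⟨x, hadj, hxS⟩ := hpriv s hsS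
    rcases hTc hadj with h | h
    · exact hsT h
    · exact hxS (hT.1 h)

theorem statement_15' {V : Type*} [Fintype V] (G : SimpleGraph V) (k : ℕ) (c : V → Fin k)
    (hclique : ∀ u v : V, c u = c v → u ≠ v → G.Adj u v)
    (hsize : ∀ i : Fin k, 2 ≤ {v : V | c v = i}.ncard) :
    (∃ S : Set ((V ⊕ V) ⊕ (Fin k ⊕ Fin k)),
        Set.range Sum.inr ⊆ S ∧ IsMinimalVertexCover (extGraph G c) S) ↔
      ∃ I : Set V, IsIndepSet G I ∧ ∀ i : Fin k, ∃! v : V, v ∈ I ∧ c v = i := by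
  constructor
  · rintro ⟨S, hU, hmin⟩
    rw [minimalVC_iff_private] at hmin
    obtain ⟨hcov, hpriv⟩ := hmin
    set I : Set V := {u | Sum.inl (Sum.inl u) ∉ S} with hI
    -- Step A: each class meets I
    have stepA : ∀ i : Fin k, ∃ u, c u = i ∧ u ∈ I := by
      intro i
      obtain ⟨x, hadj, hxS⟩ := hpriv (Sum.inr (Sum.inr i)) (hU ⟨Sum.inr i, rfl⟩)
      rcases x with (u | u) | (j | j)
      · simp [extGraph, SimpleGraph.fromRel_adj] at hadj
        exact ⟨u, hadj, hxS⟩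
      all_goals simp [extGraph, SimpleGraph.fromRel_adj] at hadj
    -- Step B/C: each class has a special element x ∈ I with no G-neighbor in I
    have stepC : ∀ i : Fin k, ∃ x, c x = i ∧ x ∈ I ∧ ∀ y ∈ I, ¬ G.Adj y x := by
      intro i
      obtain ⟨x, hadj, hxS⟩ := hpriv (Sum.inr (Sum.inl i)) (hU ⟨Sum.inl i, rfl⟩)
      rcases x with (u | u) | (j | j)
      · simp [extGraph, SimpleGraph.fromRel_adj] at hadj
      case inl.inr =>
        simp [extGraph, SimpleGraph.fromRel_adj] at hadj
        -- u : barred copy, c u = i, Sum.inl (Sum.inr u) ∉ S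
        have hnbr : ∀ y ∈ I, ¬ G.Adj y u := by
          intro y hy hadj'
          have : (extGraph G c).Adj (Sum.inl (Sum.inl y)) (Sum.inl (Sum.inr u)) := by
            simp [extGraph, SimpleGraph.fromRel_adj, hadj']
          rcases hcov this with h | h
          · exact hy h
          · exact hxS h
        obtain ⟨w, hwc, hwI⟩ := stepA i
        have hwu : w = u := by
          by_contra hne
          exact hnbr w hwI (hclique w u (by rw [hwc, hadj]) hne)
        exact ⟨u, hadj, hwu ▸ hwI, hnbr⟩
      all_goals simp [extGraph, SimpleGraph.fromRel_adj] at hadj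
    refine ⟨I, ?_, ?_⟩
    · intro u v hu hv hadj
      obtain ⟨x, hxc, hxI, hxnbr⟩ := stepC (c v)
      have hvx : v = x := by
        by_contra hne
        exact hxnbr v hv (hclique v x (hxc.symm) hne)
      exact hxnbr u hu (hvx ▸ hadj)
    · intro i
      obtain ⟨x, hxc, hxI, hxnbr⟩ := stepC i
      refine ⟨x, ⟨hxI, hxc⟩, ?_⟩
      rintro y ⟨hyI, hyc⟩
      by_contra hne
      exact hxnbr y hyI (hclique y x (by rw [hyc, hxc]) hne)
  · rintro ⟨I, hind, huniq⟩
    classical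
    set S : Set ((V ⊕ V) ⊕ (Fin k ⊕ Fin k)) :=
      {z | match z with
        | .inl (.inl u) => u ∉ I
        | .inl (.inr v) => ∃ u ∈ I, G.Adj u v
        | .inr _ => True} with hS
    have memS1 : ∀ u : V, Sum.inl (Sum.inl u) ∈ S ↔ u ∉ I := fun u => Iff.rfl
    have memS2 : ∀ v : V, Sum.inl (Sum.inr v) ∈ S ↔ ∃ u ∈ I, G.Adj u v := fun v => Iff.rfl
    have memS3 : ∀ p : Fin k ⊕ Fin k, Sum.inr p ∈ S := fun p => trivial
    -- barred copies of I elements are not in S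
    have hbarI : ∀ v ∈ I, Sum.inl (Sum.inr v) ∉ S := by
      intro v hv hmem
      obtain ⟨u, hu, hadj⟩ := (memS2 v).mp hmem
      exact hind hu hv hadj
    refine ⟨S, ?_, ?_⟩
    · rintro _ ⟨p, rfl⟩; exact memS3 p
    · rw [minimalVC_iff_private]
      constructor
      · rintro ((u | u) | (i | i)) ((v | v) | (j | j)) hadj <;>
          simp only [extGraph, SimpleGraph.fromRel_adj] at hadj <;>
          try (first | exact Or.inr (memS3 _) | exact Or.inl (memS3 _))
        · simp at hadj
        · -- u unbarred, v barred, G.Adj u v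
          obtain ⟨-, hadj⟩ := hadj
          simp at hadj
          by_cases hu : u ∈ I
          · exact Or.inr ((memS2 v).mpr ⟨u, hu, hadj⟩)
          · exact Or.inl ((memS1 u).mpr hu)
        · -- u barred, v unbarred
          obtain ⟨-, hadj⟩ := hadj
          simp at hadj
          by_cases hv : v ∈ I
          · exact Or.inl ((memS2 u).mpr ⟨v, hv, hadj⟩)
          · exact Or.inr ((memS1 v).mpr hv)
        · simp at hadj
      · rintro ((u | u) | (i | i)) hs
        · -- u ∉ I; private edge to barred copy of class rep
          obtain ⟨v, ⟨hvI, hvc⟩, -⟩ := huniq (c u)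
          have hne : u ≠ v := fun h => ((memS1 u).mp hs) (h ▸ hvI)
          refine ⟨Sum.inl (Sum.inr v), ?_, hbarI v hvI⟩
          simp [extGraph, SimpleGraph.fromRel_adj, hclique u v hvc.symm hne]
        · -- barred u with ∃ w ∈ I, Adj w u
          obtain ⟨w, hw, hadj⟩ := (memS2 u).mp hs
          refine ⟨Sum.inl (Sum.inl w), ?_, fun h => ((memS1 w).mp h) hw⟩
          simp [extGraph, SimpleGraph.fromRel_adj, hadj]
        · -- w_i : neighbor barred rep of class i
          obtain ⟨v, ⟨hvI, hvc⟩, -⟩ := huniq i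
          refine ⟨Sum.inl (Sum.inr v), ?_, hbarI v hvI⟩
          simp [extGraph, SimpleGraph.fromRel_adj, hvc]
        · -- w̄_i : neighbor unbarred rep of class i
          obtain ⟨v, ⟨hvI, hvc⟩, -⟩ := huniq i
          refine ⟨Sum.inl (Sum.inl v), ?_, fun h => ((memS1 v).mp h) hvI⟩
          simp [extGraph, SimpleGraph.fromRel_adj, hvc]

/-- Suppose `V` is partitioned into classes `V_1, …, V_k` (the fibers of the
coloring `c`), each inducing a clique of size at least `2` in `G`. With
`U = {w_i, w̄_i : 1 ≤ i ≤ k}`, the graph `G' = extGraph G c` has a minimal vertex cover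
containing `U` iff `G` has an independent set containing exactly one vertex from each
class `V_i`. -/
theorem statement_15 {V : Type*} [Fintype V] (G : SimpleGraph V) (k : ℕ) (c : V → Fin k)
    (hclique : ∀ u v : V, c u = c v → u ≠ v → G.Adj u v)
    (hsize : ∀ i : Fin k, 2 ≤ {v : V | c v = i}.ncard) :
    (∃ S : Set ((V ⊕ V) ⊕ (Fin k ⊕ Fin k)),
        Set.range Sum.inr ⊆ S ∧ IsMinimalVertexCover (extGraph G c) S) ↔
      ∃ I : Set V, IsIndepSet G I ∧ ∀ i : Fin k, ∃! v : V, v ∈ I ∧ c v = i :=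
  statement_15' G k c hclique hsize
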